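/- arXiv:2209.10706 — 4 statements merged into one kernel-verified Lean document; each statement's English description precedes it below -/
import Mathlib

section
/- Let f: ℝ → ℝ be continuously differentiable with locally Hölder continuous derivative of exponent β ∈ (0,1], and suppose f(0) = 0. Then for every n ∈ ℕ and every ū > 0 there exists a constant b₁ > 0 such that for all u₁,…,uₙ ∈ [-ū, ū], |f(∑ᵢ uᵢ) - ∑ᵢ f(uᵢ)| ≤ b₁ ∑_{i<j} |uᵢ uⱼ|^β. -/
/-!
Fix `M = n ū` and a Hölder constant `C` of `f'` on `[-M, M]`. Adding the summands one at a time,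
the mean value theorem applied to `t ↦ f (x + t) - f t` bounds the error of each step by
`C |x|^β |y|`, where `x` is the partial sum so far and `y` the new summand. Subadditivity of
`t ↦ t^β` gives `|x|^β ≤ ∑ |uᵢ|^β`, and `|y| ≤ ū^(1-β) |y|^β`, so the step error is at most
`C ū^(1-β) ∑ᵢ |uᵢ y|^β`; summing over the steps gives `b₁ = C ū^(1-β)`.
-/

open Finset

namespace Real

theorem rpow_sum_le_sum_rpow {ι : Type*} {p : ℝ} (hp0 : 0 < p) (hp1 : p ≤ 1) (s : Finset ι)
    {a : ι → ℝ} (ha : ∀ i ∈ s, 0 ≤ a i) : (∑ i ∈ s, a i) ^ p ≤ ∑ i ∈ s, a i ^ p := by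
  classical
  induction s using Finset.induction with
  | empty => simp [zero_rpow hp0.ne']
  | insert j s hj ih =>
    rw [sum_insert hj, sum_insert hj]
    have ha' : ∀ i ∈ s, 0 ≤ a i := fun i hi => ha i (mem_insert_of_mem hi)
    calc (a j + ∑ i ∈ s, a i) ^ p ≤ a j ^ p + (∑ i ∈ s, a i) ^ p :=
          rpow_add_le_add_rpow (ha j (mem_insert_self j s)) (sum_nonneg ha') hp0.le hp1
      _ ≤ a j ^ p + ∑ i ∈ s, a i ^ p := by gcongr; exact ih ha'

theorem abs_sum_rpow_le_sum_abs_rpow {ι : Type*} {p : ℝ} (hp0 : 0 < p) (hp1 : p ≤ 1)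
    (s : Finset ι) (a : ι → ℝ) : |∑ i ∈ s, a i| ^ p ≤ ∑ i ∈ s, |a i| ^ p :=
  (rpow_le_rpow (abs_nonneg _) (abs_sum_le_sum_abs a s) hp0.le).trans
    (rpow_sum_le_sum_rpow hp0 hp1 s fun i _ => abs_nonneg (a i))

theorem self_le_rpow_one_sub_mul_rpow {y b p : ℝ} (hy : 0 ≤ y) (hyb : y ≤ b) (hp1 : p ≤ 1) :
    y ≤ b ^ (1 - p) * y ^ p := by
  rcases hy.eq_or_lt with rfl | hy
  · exact mul_nonneg (rpow_nonneg (hy.trans hyb) _) (rpow_nonneg le_rfl _)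
  calc y = y ^ (1 - p) * y ^ p := by rw [← rpow_add hy, sub_add_cancel, rpow_one]
    _ ≤ b ^ (1 - p) * y ^ p := by gcongr

end Real

theorem rpow_abs_sum_mul_abs_le {ι : Type*} {β b y : ℝ} (hβ0 : 0 < β) (hβ1 : β ≤ 1)
    (s : Finset ι) (u : ι → ℝ) (hy : |y| ≤ b) :
    |∑ i ∈ s, u i| ^ β * |y| ≤ b ^ (1 - β) * ∑ i ∈ s, |u i * y| ^ β :=
  calc |∑ i ∈ s, u i| ^ β * |y| ≤ (∑ i ∈ s, |u i| ^ β) * (b ^ (1 - β) * |y| ^ β) := by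
        gcongr
        · exact Real.abs_sum_rpow_le_sum_abs_rpow hβ0 hβ1 s u
        · exact Real.self_le_rpow_one_sub_mul_rpow (abs_nonneg y) hy hβ1
    _ = b ^ (1 - β) * ∑ i ∈ s, |u i * y| ^ β := by
        simp only [abs_mul, Real.mul_rpow (abs_nonneg _) (abs_nonneg _), sum_mul, mul_sum]
        exact sum_congr rfl fun i _ => by ring

theorem sum_sum_filter_lt_insert_of_forall_lt {ι M : Type*} [LinearOrder ι] [AddCommMonoid M]
    (g : ι → ι → M) {a : ι} {s : Finset ι} (ha : ∀ x ∈ s, x < a) :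
    ∑ i ∈ insert a s, ∑ j ∈ insert a s with i < j, g i j =
      ∑ i ∈ s, ∑ j ∈ s with i < j, g i j + ∑ i ∈ s, g i a := by
  have has : a ∉ s := fun h => lt_irrefl a (ha a h)
  have h_above_a : ({j ∈ insert a s | a < j} : Finset ι) = ∅ :=
    filter_eq_empty_iff.2 fun j hj => by
      rcases mem_insert.1 hj with rfl | hj
      · exact lt_irrefl j
      · exact (ha j hj).not_gt
  rw [sum_insert has, h_above_a, sum_empty, zero_add, ← sum_add_distrib]
  refine sum_congr rfl fun i hi => ?_
  rw [filter_insert, if_pos (ha i hi), sum_insert fun h => has (mem_filter.1 h).1, add_comm]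

theorem abs_sub_sub_sub_le_of_holder_deriv {f : ℝ → ℝ} (hf : Differentiable ℝ f) {β C M : ℝ}
    (hC : ∀ s ∈ Set.Icc (-M) M, ∀ t ∈ Set.Icc (-M) M, |deriv f s - deriv f t| ≤ C * |s - t| ^ β)
    {x y : ℝ} (hxy : |x| + |y| ≤ M) :
    |f (x + y) - f x - (f y - f 0)| ≤ C * |x| ^ β * |y| := by
  have hderiv : ∀ t, HasDerivAt (fun t => f (x + t) - f t) (deriv f (x + t) - deriv f t) t :=
    fun t => ((hf _).hasDerivAt.comp_const_add x t).sub (hf t).hasDerivAt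
  have bound : ∀ t ∈ Set.uIcc 0 y, ‖deriv f (x + t) - deriv f t‖ ≤ C * |x| ^ β := by
    intro t ht
    have ht : |t| ≤ |y| := by simpa using Set.abs_sub_left_of_mem_uIcc ht
    have hxt : |x + t| ≤ M := (abs_add_le x t).trans (by linarith)
    have htM : |t| ≤ M := by linarith [abs_nonneg x]
    simpa using hC (x + t) (abs_le.1 hxt) t (abs_le.1 htM)
  have := Convex.norm_image_sub_le_of_norm_hasDerivWithin_le
    (fun t _ => (hderiv t).hasDerivWithinAt) bound (convex_uIcc 0 y) Set.left_mem_uIcc Set.right_mem_uIcc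
  rw [sub_sub_sub_comm]
  simpa only [Real.norm_eq_abs, add_zero, sub_zero] using this

theorem abs_map_sum_sub_sum_map_le {ι : Type*} [LinearOrder ι] {f : ℝ → ℝ}
    (hf : Differentiable ℝ f) (hf0 : f 0 = 0) {β C M b : ℝ} (hβ0 : 0 < β) (hβ1 : β ≤ 1)
    (hC0 : 0 ≤ C)
    (hC : ∀ s ∈ Set.Icc (-M) M, ∀ t ∈ Set.Icc (-M) M, |deriv f s - deriv f t| ≤ C * |s - t| ^ β)
    (s : Finset ι) {u : ι → ℝ} (hub : ∀ i ∈ s, |u i| ≤ b) (hM : ∑ i ∈ s, |u i| ≤ M) :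
    |f (∑ i ∈ s, u i) - ∑ i ∈ s, f (u i)| ≤
      C * b ^ (1 - β) * ∑ i ∈ s, ∑ j ∈ s with i < j, |u i * u j| ^ β := by
  classical
  induction s using Finset.induction_on_max with
  | empty => simp [hf0]
  | insert a s ha ih =>
    have has : a ∉ s := fun h => lt_irrefl a (ha a h)
    rw [sum_insert has] at hM
    rw [sum_sum_filter_lt_insert_of_forall_lt _ ha, sum_insert has, sum_insert has, mul_add]
    set x := ∑ i ∈ s, u i
    have hx : |x| + |u a| ≤ M := by linarith [abs_sum_le_sum_abs u s]
    have hstep := abs_sub_sub_sub_le_of_holder_deriv hf hC hx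
    rw [hf0, sub_zero] at hstep
    have hua := hub a (mem_insert_self a s)
    have hb : 0 ≤ b := (abs_nonneg _).trans hua
    have hcross := rpow_abs_sum_mul_abs_le hβ0 hβ1 s u hua
    have hprev := ih (fun i hi => hub i (mem_insert_of_mem hi)) (by linarith [abs_nonneg (u a)])
    calc |f (u a + x) - (f (u a) + ∑ i ∈ s, f (u i))|
        = |(f (x + u a) - f x - f (u a)) + (f x - ∑ i ∈ s, f (u i))| := by
          rw [add_comm (u a)]; congr 1; ring
      _ ≤ C * |x| ^ β * |u a| +
          C * b ^ (1 - β) * ∑ i ∈ s, ∑ j ∈ s with i < j, |u i * u j| ^ β :=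
          (abs_add_le _ _).trans (add_le_add hstep hprev)
      _ ≤ C * (b ^ (1 - β) * ∑ i ∈ s, |u i * u a| ^ β) +
          C * b ^ (1 - β) * ∑ i ∈ s, ∑ j ∈ s with i < j, |u i * u j| ^ β := by
          rw [mul_assoc]; gcongr
      _ = _ := by ring

/-- If `f ∈ C¹` with locally `β`-Hölder derivative and `f 0 = 0`, then for every `n` and `ū > 0`
there is `b₁ > 0` with `|f (∑ uᵢ) - ∑ f uᵢ| ≤ b₁ ∑_{i<j} |uᵢ uⱼ|^β` for `uᵢ ∈ [-ū, ū]`. -/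
theorem stmt0 (f : ℝ → ℝ) (β : ℝ) (hβ0 : 0 < β) (hβ1 : β ≤ 1)
    (hdiff : Differentiable ℝ f)
    (hholder : ∀ K : Set ℝ, IsCompact K → ∃ C > 0, ∀ s ∈ K, ∀ t ∈ K,
      |deriv f s - deriv f t| ≤ C * |s - t| ^ β)
    (hf0 : f 0 = 0) (n : ℕ) (ub : ℝ) (hub : 0 < ub) :
    ∃ b₁ > 0, ∀ u : Fin n → ℝ, (∀ i, u i ∈ Set.Icc (-ub) ub) →
      |f (∑ i, u i) - ∑ i, f (u i)| ≤
        b₁ * ∑ i : Fin n, ∑ j ∈ Finset.Ioi i, |u i * u j| ^ β := by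
  obtain ⟨C, hC0, hC⟩ := hholder (Set.Icc (-(n * ub)) (n * ub)) isCompact_Icc
  refine ⟨C * ub ^ (1 - β), by positivity, fun u hu => ?_⟩
  have hub' : ∀ i ∈ univ, |u i| ≤ ub := fun i _ => abs_le.2 (hu i)
  have hM : ∑ i, |u i| ≤ n * ub := by simpa using sum_le_sum hub'
  simpa only [filter_lt_eq_Ioi] using
    abs_map_sum_sub_sum_map_le hdiff hf0 hβ0 hβ1 hC0.le hC univ hub' hM
end

section
/- Let f: ℝ → ℝ be continuously differentiable with locally Hölder continuous derivative of exponent β ∈ (0,1], with f(0) = 0 and f'(0) = 0, and let F(u) = ∫₀^u f. Define G(u,v) := F(u+v) - F(u) - F(v) - f(u)v - f(v)u. Then for every ū > 0 there exists b₂ > 0 such that |G(u,v)| ≤ b₂ |uv|^{1+β/2} for all u, v ∈ [-ū, ū]. -/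
/-!
With `C` a Hölder constant of `f'` on `[-2ū, 2ū]` and `|s| ≤ |t|`, comparing `f'(s + t)` with
`f'(t)` and `f'(s)` with `f'(0) = 0` gives
`|f'(s + t) - f'(s) - f'(t)| ≤ 2C|s|^β ≤ 2C|s|^{β/2}|t|^{β/2}`.
Since `∂ᵤ∂ᵥ G(u, v) = f'(u + v) - f'(u) - f'(v)` and `G` vanishes on both axes, two applications of
the mean value inequality, one in each variable, give `|G(u, v)| ≤ 2C|u|^{1+β/2}|v|^{1+β/2}`.
-/

open Set

theorem rpow_le_rpow_half_mul_rpow_half {x y β : ℝ} (hx : 0 ≤ x) (hxy : x ≤ y) (hβ : 0 ≤ β) :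
    x ^ β ≤ x ^ (β / 2) * y ^ (β / 2) :=
  calc x ^ β = x ^ (β / 2) * x ^ (β / 2) := by
        rw [← Real.rpow_add_of_nonneg hx (by linarith) (by linarith), add_halves]
    _ ≤ x ^ (β / 2) * y ^ (β / 2) := by gcongr

theorem abs_le_mul_abs_of_hasDerivAt {g g' : ℝ → ℝ} {a M : ℝ} (hg0 : g 0 = 0)
    (hg : ∀ s ∈ uIcc 0 a, HasDerivAt g (g' s) s) (hbound : ∀ s ∈ uIcc 0 a, |g' s| ≤ M) :
    |g a| ≤ M * |a| := by
  simpa [hg0] using (convex_uIcc 0 a).norm_image_sub_le_of_norm_hasDerivWithin_le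
    (fun s hs => (hg s hs).hasDerivWithinAt) hbound left_mem_uIcc right_mem_uIcc

theorem abs_add_sub_sub_le_of_holder {d : ℝ → ℝ} {C β r : ℝ} (hC : 0 ≤ C) (hβ : 0 ≤ β)
    (hd0 : d 0 = 0)
    (hd : ∀ x ∈ Icc (-(2 * r)) (2 * r), ∀ y ∈ Icc (-(2 * r)) (2 * r), |d x - d y| ≤ C * |x - y| ^ β)
    {s t : ℝ} (hs : |s| ≤ r) (ht : |t| ≤ r) :
    |d (s + t) - d s - d t| ≤ 2 * C * |s| ^ (β / 2) * |t| ^ (β / 2) := by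
  wlog hst : |s| ≤ |t| generalizing s t
  · have := this ht hs (le_of_not_ge hst)
    rwa [add_comm t s, sub_right_comm, mul_right_comm] at this
  have mem : ∀ x, |x| ≤ 2 * r → x ∈ Icc (-(2 * r)) (2 * r) := fun x hx => abs_le.mp hx
  have hshift : |d (s + t) - d t| ≤ C * |s| ^ β := by
    simpa using hd (s + t) (mem _ (by linarith [abs_add_le s t])) t
      (mem _ (by linarith [abs_nonneg s]))
  have hzero : |d s - d 0| ≤ C * |s| ^ β := by
    simpa using hd s (mem _ (by linarith [abs_nonneg s])) 0
      (mem _ (by rw [abs_zero]; linarith [abs_nonneg s]))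
  calc |d (s + t) - d s - d t| ≤ |d (s + t) - d t| + |d s - d 0| := by
        rw [hd0, sub_zero, sub_right_comm]; exact abs_sub _ _
    _ ≤ 2 * C * |s| ^ β := by linarith
    _ ≤ 2 * C * |s| ^ (β / 2) * |t| ^ (β / 2) := by
        rw [mul_assoc _ (|s| ^ (β / 2))]
        exact mul_le_mul_of_nonneg_left (rpow_le_rpow_half_mul_rpow_half (abs_nonneg s) hst hβ)
          (by positivity)

section MixedDifference

variable {f : ℝ → ℝ} {K γ r : ℝ}

theorem abs_add_sub_sub_sub_mul_deriv_le (hf : Differentiable ℝ f) (hf0 : f 0 = 0) (hK : 0 ≤ K)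
    (hγ : 0 ≤ γ)
    (hmixed : ∀ s t, |s| ≤ r → |t| ≤ r →
      |deriv f (s + t) - deriv f s - deriv f t| ≤ K * |s| ^ γ * |t| ^ γ)
    {u t : ℝ} (hu : |u| ≤ r) (ht : |t| ≤ r) :
    |f (u + t) - f t - f u - u * deriv f t| ≤ K * |u| ^ γ * |t| ^ γ * |u| := by
  refine abs_le_mul_abs_of_hasDerivAt (g := fun s => f (s + t) - f t - f s - s * deriv f t)
    (g' := fun s => deriv f (s + t) - deriv f s - deriv f t) (by simp [hf0]) (fun s _ => ?_)
    (fun s hs => ?_)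
  · exact ((((hf (s + t)).hasDerivAt.comp_add_const s t).sub_const (f t)).sub
      (hf s).hasDerivAt).sub (hasDerivAt_mul_const (deriv f t))
  · have hsu : |s| ≤ |u| := by simpa using abs_sub_left_of_mem_uIcc hs
    calc _ ≤ K * |s| ^ γ * |t| ^ γ := hmixed s t (hsu.trans hu) ht
      _ ≤ K * |u| ^ γ * |t| ^ γ := by gcongr

theorem abs_primitive_add_sub_sub_sub_le (hf : Differentiable ℝ f) (hf0 : f 0 = 0) (hK : 0 ≤ K)
    (hγ : 0 ≤ γ)
    (hmixed : ∀ s t, |s| ≤ r → |t| ≤ r →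
      |deriv f (s + t) - deriv f s - deriv f t| ≤ K * |s| ^ γ * |t| ^ γ)
    {F : ℝ → ℝ} (hF : ∀ x, HasDerivAt F (f x) x) (hF0 : F 0 = 0)
    {u v : ℝ} (hu : |u| ≤ r) (hv : |v| ≤ r) :
    |F (u + v) - F u - F v - f u * v - f v * u| ≤ K * |u| ^ γ * |v| ^ γ * |u| * |v| := by
  refine abs_le_mul_abs_of_hasDerivAt (g := fun t => F (u + t) - F u - F t - f u * t - f t * u)
    (g' := fun t => f (u + t) - f t - f u - u * deriv f t) (by simp [hf0, hF0]) (fun t _ => ?_)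
    (fun t ht => ?_)
  · exact ((((((hF (u + t)).comp_const_add u t).sub_const (F u)).sub (hF t)).sub
      (hasDerivAt_const_mul (f u))).sub ((hf t).hasDerivAt.mul_const u)).congr_deriv (by ring)
  · have htv : |t| ≤ |v| := by simpa using abs_sub_left_of_mem_uIcc ht
    calc _ ≤ K * |u| ^ γ * |t| ^ γ * |u| :=
          abs_add_sub_sub_sub_mul_deriv_le hf hf0 hK hγ hmixed hu (htv.trans hv)
      _ ≤ K * |u| ^ γ * |v| ^ γ * |u| := by gcongr

end MixedDifference

theorem stmt1_general (f : ℝ → ℝ) (β : ℝ) (hβ0 : 0 < β)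
    (hdiff : Differentiable ℝ f)
    (hholder : ∀ K : Set ℝ, IsCompact K → ∃ C > 0, ∀ s ∈ K, ∀ t ∈ K,
      |deriv f s - deriv f t| ≤ C * |s - t| ^ β)
    (hf0 : f 0 = 0) (hf'0 : deriv f 0 = 0)
    (F : ℝ → ℝ) (hF : ∀ u : ℝ, F u = ∫ t in (0:ℝ)..u, f t)
    (ub : ℝ) :
    ∃ b₂ > 0, ∀ u ∈ Set.Icc (-ub) ub, ∀ v ∈ Set.Icc (-ub) ub,
      |F (u + v) - F u - F v - f u * v - f v * u| ≤ b₂ * |u * v| ^ (1 + β / 2) := by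
  obtain ⟨C, hC, hCholder⟩ := hholder (Icc (-(2 * ub)) (2 * ub)) isCompact_Icc
  have hmixed : ∀ s t, |s| ≤ ub → |t| ≤ ub →
      |deriv f (s + t) - deriv f s - deriv f t| ≤ 2 * C * |s| ^ (β / 2) * |t| ^ (β / 2) :=
    fun s t hs ht => abs_add_sub_sub_le_of_holder hC.le hβ0.le hf'0 hCholder hs ht
  have hFderiv : ∀ x, HasDerivAt F (f x) x := fun x => by
    simpa only [← hF] using (hdiff.continuous.integral_hasStrictDerivAt 0 x).hasDerivAt
  refine ⟨2 * C, by positivity, fun u hu v hv => ?_⟩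
  calc _ ≤ 2 * C * |u| ^ (β / 2) * |v| ^ (β / 2) * |u| * |v| :=
        abs_primitive_add_sub_sub_sub_le hdiff hf0 (by positivity) (by positivity) hmixed hFderiv
          (by simp [hF]) (abs_le.mpr hu) (abs_le.mpr hv)
    _ = 2 * C * |u * v| ^ (1 + β / 2) := by
        rw [abs_mul, Real.mul_rpow (abs_nonneg u) (abs_nonneg v),
          Real.rpow_add_of_nonneg (abs_nonneg u) zero_le_one (by positivity),
          Real.rpow_add_of_nonneg (abs_nonneg v) zero_le_one (by positivity),
          Real.rpow_one, Real.rpow_one]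
        ring

/-- For `f ∈ C¹` with locally `β`-Hölder derivative, `f 0 = 0`, `f' 0 = 0`, and `F` the primitive
of `f`, the function `G(u,v) = F(u+v) - F u - F v - f u * v - f v * u` satisfies
`|G(u,v)| ≤ b₂ |uv|^{1+β/2}` on `[-ū,ū]²` for some `b₂ > 0`. -/
theorem stmt1 (f : ℝ → ℝ) (β : ℝ) (hβ0 : 0 < β) (hβ1 : β ≤ 1)
    (hdiff : Differentiable ℝ f)
    (hholder : ∀ K : Set ℝ, IsCompact K → ∃ C > 0, ∀ s ∈ K, ∀ t ∈ K,
      |deriv f s - deriv f t| ≤ C * |s - t| ^ β)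
    (hf0 : f 0 = 0) (hf'0 : deriv f 0 = 0)
    (F : ℝ → ℝ) (hF : ∀ u : ℝ, F u = ∫ t in (0:ℝ)..u, f t)
    (ub : ℝ) (hub : 0 < ub) :
    ∃ b₂ > 0, ∀ u ∈ Set.Icc (-ub) ub, ∀ v ∈ Set.Icc (-ub) ub,
      |F (u + v) - F u - F v - f u * v - f v * u| ≤ b₂ * |u * v| ^ (1 + β / 2) :=
  stmt1_general f β hβ0 hdiff hholder hf0 hf'0 F hF ub
end

section
/- Let N ≥ 3 and let ω ∈ C²([1,∞)) be positive with ω satisfying the radial equation ω'' + ((N-1)/r) ω' + f(ω) = 0 on [1,∞) for some continuous f with f(ω(r)) > 0 for all r, and suppose there are constants 0 < c₁ ≤ c₂ with c₁ ≤ r^{N-2} ω(r) ≤ c₂ for all r ≥ 1. Then the limit lim_{r→∞} r^{N-2} ω(r) exists and is a positive real number. -/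
/-!
With `u = r^(N-2) ω` one has `u' = r^(N-3) w` for `w = (N-2) ω + r ω'`, and the radial equation
gives `w' = -r f(ω) < 0`. So `w` is decreasing, hence eventually of one sign, and `u` is
eventually monotone. Being bounded, `u` converges, and its limit is at least `c₁ > 0`.
-/

open Filter Set Topology

theorem MonotoneOn.exists_tendsto_atTop_of_le {α : Type*} [LinearOrder α] {u : α → ℝ}
    {a : α} {C : ℝ} (hu : MonotoneOn u (Ici a)) (hC : ∀ x ∈ Ici a, u x ≤ C) :
    ∃ L, Tendsto u atTop (𝓝 L) := by
  have hmono : Monotone (fun x => u (max x a)) := fun x y hxy =>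
    hu le_sup_right le_sup_right (max_le_max hxy le_rfl)
  have hbdd : BddAbove (range fun x => u (max x a)) :=
    ⟨C, by rintro _ ⟨x, rfl⟩; exact hC _ le_sup_right⟩
  refine ⟨_, (tendsto_atTop_ciSup hmono hbdd).congr' ?_⟩
  filter_upwards [eventually_ge_atTop a] with x hx
  rw [max_eq_left hx]

theorem AntitoneOn.exists_tendsto_atTop_of_ge {α : Type*} [LinearOrder α] {u : α → ℝ}
    {a : α} {C : ℝ} (hu : AntitoneOn u (Ici a)) (hC : ∀ x ∈ Ici a, C ≤ u x) :
    ∃ L, Tendsto u atTop (𝓝 L) := by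
  obtain ⟨L, hL⟩ := hu.neg.exists_tendsto_atTop_of_le fun x hx => neg_le_neg (hC x hx)
  exact ⟨-L, by simpa using hL.neg⟩

theorem exists_monotoneOn_or_antitoneOn_of_hasDerivAt_mul {u g w : ℝ → ℝ} {a : ℝ}
    (hu : ∀ r ∈ Ioi a, HasDerivAt u (g r * w r) r) (hg : ∀ r ∈ Ioi a, 0 < g r)
    (hw : AntitoneOn w (Ioi a)) :
    ∃ b, a < b ∧ (MonotoneOn u (Ici b) ∨ AntitoneOn u (Ici b)) := by
  have hderiv {b : ℝ} (hab : a < b) :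
      ∀ r ∈ interior (Ici b), HasDerivWithinAt u (g r * w r) (interior (Ici b)) r := by
    intro r hr
    rw [interior_Ici, mem_Ioi] at hr
    exact (hu r (hab.trans hr)).hasDerivWithinAt
  have hcont {b : ℝ} (hab : a < b) : ContinuousOn u (Ici b) := fun r hr =>
    (hu r (hab.trans_le hr)).continuousAt.continuousWithinAt
  by_cases hsign : ∀ r ∈ Ioi a, 0 ≤ w r
  · refine ⟨a + 1, by linarith, Or.inl ?_⟩
    refine monotoneOn_of_hasDerivWithinAt_nonneg (convex_Ici _) (hcont (by linarith))
      (hderiv (by linarith)) fun r hr => ?_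
    rw [interior_Ici, mem_Ioi] at hr
    have har : a < r := by linarith
    exact mul_nonneg (hg r har).le (hsign r har)
  · push Not at hsign
    obtain ⟨b, hab, hwb⟩ := hsign
    refine ⟨b, hab, Or.inr ?_⟩
    refine antitoneOn_of_hasDerivWithinAt_nonpos (convex_Ici _) (hcont hab) (hderiv hab)
      fun r hr => ?_
    rw [interior_Ici, mem_Ioi] at hr
    have hwr : w r < 0 := (hw hab (mem_Ioi.2 (hab.trans hr)) hr.le).trans_lt hwb
    exact mul_nonpos_of_nonneg_of_nonpos (hg r (mem_Ioi.2 (hab.trans hr))).le hwr.le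

theorem exists_tendsto_of_hasDerivAt_mul_of_antitoneOn {u g w : ℝ → ℝ} {a c₁ c₂ : ℝ}
    (hu : ∀ r ∈ Ioi a, HasDerivAt u (g r * w r) r) (hg : ∀ r ∈ Ioi a, 0 < g r)
    (hw : AntitoneOn w (Ioi a)) (hbdd : ∀ r ∈ Ioi a, c₁ ≤ u r ∧ u r ≤ c₂) :
    ∃ L, Tendsto u atTop (𝓝 L) := by
  obtain ⟨b, hab, hmono | hanti⟩ := exists_monotoneOn_or_antitoneOn_of_hasDerivAt_mul hu hg hw
  · exact hmono.exists_tendsto_atTop_of_le fun r hr => (hbdd r (hab.trans_le hr)).2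
  · exact hanti.exists_tendsto_atTop_of_ge fun r hr => (hbdd r (hab.trans_le hr)).1

theorem ContDiffOn.hasDerivAt_deriv {𝕜 F : Type*} [NontriviallyNormedField 𝕜]
    [NormedAddCommGroup F] [NormedSpace 𝕜 F] {f : 𝕜 → F} {s : Set 𝕜}
    (hf : ContDiffOn 𝕜 2 f s) (hs : IsOpen s) {x : 𝕜} (hx : x ∈ s) :
    HasDerivAt (deriv f) (deriv (deriv f) x) x :=
  (((hf.deriv_of_isOpen hs (m := 1) le_rfl).differentiableOn one_ne_zero x hx).differentiableAt
    (hs.mem_nhds hx)).hasDerivAt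

theorem hasDerivAt_rpow_mul {ω : ℝ → ℝ} {p r ω' : ℝ} (hr : 0 < r)
    (hω : HasDerivAt ω ω' r) :
    HasDerivAt (fun s => s ^ p * ω s) (r ^ (p - 1) * (p * ω r + r * ω')) r := by
  refine ((Real.hasDerivAt_rpow_const (Or.inl hr.ne')).mul hω).congr_deriv ?_
  rw [show r ^ p = r ^ (p - 1) * r by rw [← Real.rpow_add_one hr.ne', sub_add_cancel]]
  ring

theorem hasDerivAt_radial_flux {ω ω' : ℝ → ℝ} {n r ω'' F : ℝ} (hr : r ≠ 0)
    (hω : HasDerivAt ω (ω' r) r) (hω' : HasDerivAt ω' ω'' r)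
    (hode : ω'' + (n - 1) / r * ω' r + F = 0) :
    HasDerivAt (fun s => (n - 2) * ω s + s * ω' s) (-(r * F)) r := by
  refine ((hω.const_mul (n - 2)).add ((hasDerivAt_id' r).mul hω')).congr_deriv ?_
  field_simp at hode
  linarith

theorem stmt6_general (N : ℕ) (ω f : ℝ → ℝ)
    (hω : ContDiffOn ℝ 2 ω (Set.Ici 1))
    (hfpos : ∀ r : ℝ, 1 ≤ r → 0 < f (ω r))
    (hode : ∀ r : ℝ, 1 ≤ r →
      deriv (deriv ω) r + ((N : ℝ) - 1) / r * deriv ω r + f (ω r) = 0)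
    (c₁ c₂ : ℝ) (hc₁ : 0 < c₁)
    (hbound : ∀ r : ℝ, 1 ≤ r →
      c₁ ≤ r ^ ((N : ℝ) - 2) * ω r ∧ r ^ ((N : ℝ) - 2) * ω r ≤ c₂) :
    ∃ L : ℝ, 0 < L ∧
      Tendsto (fun r : ℝ => r ^ ((N : ℝ) - 2) * ω r) atTop (nhds L) := by
  have hω₁ : ContDiffOn ℝ 2 ω (Ioi 1) := hω.mono Ioi_subset_Ici_self
  have hdω : ∀ r ∈ Ioi (1 : ℝ), HasDerivAt ω (deriv ω r) r := fun r hr =>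
    ((hω₁.contDiffAt (isOpen_Ioi.mem_nhds hr)).differentiableAt two_ne_zero).hasDerivAt
  have hflux : ∀ r ∈ Ioi (1 : ℝ),
      HasDerivAt (fun s => ((N : ℝ) - 2) * ω s + s * deriv ω s) (-(r * f (ω r))) r :=
    fun r hr => hasDerivAt_radial_flux (zero_lt_one.trans hr).ne' (hdω r hr)
      (hω₁.hasDerivAt_deriv isOpen_Ioi hr) (hode r (le_of_lt hr))
  have hanti : AntitoneOn (fun s => ((N : ℝ) - 2) * ω s + s * deriv ω s) (Ioi 1) := by
    refine antitoneOn_of_hasDerivWithinAt_nonpos (f' := fun r => -(r * f (ω r)))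
      (convex_Ioi 1) (fun r hr => (hflux r hr).continuousAt.continuousWithinAt) ?_ fun r hr => ?_
    · simpa only [interior_Ioi] using fun r hr => (hflux r hr).hasDerivWithinAt
    · rw [interior_Ioi, mem_Ioi] at hr
      nlinarith [hfpos r hr.le]
  obtain ⟨L, hL⟩ := exists_tendsto_of_hasDerivAt_mul_of_antitoneOn
    (fun r hr => hasDerivAt_rpow_mul (zero_lt_one.trans hr) (hdω r hr))
    (fun r hr => Real.rpow_pos_of_pos (zero_lt_one.trans hr) _) hanti
    (fun r hr => hbound r (le_of_lt hr))
  refine ⟨L, hc₁.trans_le (ge_of_tendsto hL ?_), hL⟩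
  filter_upwards [eventually_ge_atTop 1] with r hr
  exact (hbound r hr).1

/-- Exact decay of the ground state (Lemma A.1): if `ω > 0` solves the radial equation
`ω'' + ((N-1)/r) ω' + f(ω) = 0` on `[1,∞)` with `f(ω(r)) > 0` and
`c₁ ≤ r^{N-2} ω(r) ≤ c₂`, then `r^{N-2} ω(r)` converges to a positive limit. -/
theorem stmt6 (N : ℕ) (hN : 3 ≤ N) (ω f : ℝ → ℝ)
    (hω : ContDiffOn ℝ 2 ω (Set.Ici 1))
    (hpos : ∀ r : ℝ, 1 ≤ r → 0 < ω r)
    (hf : Continuous f) (hfpos : ∀ r : ℝ, 1 ≤ r → 0 < f (ω r))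
    (hode : ∀ r : ℝ, 1 ≤ r →
      deriv (deriv ω) r + ((N : ℝ) - 1) / r * deriv ω r + f (ω r) = 0)
    (c₁ c₂ : ℝ) (hc₁ : 0 < c₁) (hc₁₂ : c₁ ≤ c₂)
    (hbound : ∀ r : ℝ, 1 ≤ r →
      c₁ ≤ r ^ ((N : ℝ) - 2) * ω r ∧ r ^ ((N : ℝ) - 2) * ω r ≤ c₂) :
    ∃ L : ℝ, 0 < L ∧
      Tendsto (fun r : ℝ => r ^ ((N : ℝ) - 2) * ω r) atTop (nhds L) :=
  stmt6_general N ω f hω hfpos hode c₁ c₂ hc₁ hbound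
end

section
/- Let N ≥ 5 and let m be an integer with m ≥ √2 π (π/√2)^{1/(N-3)}. With d_{ij} := |ζᵢ - ζⱼ| for the 2m points ζ₁,…,ζ_{2m} of the previous configuration (m points e^{2πik/m} on the first circle factor, m on the second), one has ∑_{1≤i≠j≤m} d_{ij}^{2-N} - ∑_{i=1}^m ∑_{j=m+1}^{2m} d_{ij}^{2-N} ≥ 2m (2 sin(π/m))^{2-N} - m² (√2)^{2-N} > m [ 2 (2π/m)^{2-N} - m (√2)^{2-N} ] ≥ 0. -/
open Finset

lemma abs_sin_succ (m i : ℕ) (hm : 3 ≤ m) (hi : i < m) :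
    |Real.sin (Real.pi * ((i : ℝ) - (((i + 1) % m : ℕ) : ℝ)) / m)| =
      Real.sin (Real.pi / m) := by
  have hm0 : (0:ℝ) < m := by exact_mod_cast Nat.lt_of_lt_of_le (by norm_num) hm
  have hm1 : (1:ℝ) < m := by exact_mod_cast Nat.lt_of_lt_of_le (by norm_num) hm
  have hs : 0 < Real.sin (Real.pi / m) :=
    Real.sin_pos_of_pos_of_lt_pi (by positivity) (div_lt_self Real.pi_pos hm1)
  by_cases h : i + 1 < m
  · rw [Nat.mod_eq_of_lt h]
    push_cast
    have harg : Real.pi * ((i:ℝ) - ((i:ℝ) + 1)) / m = -(Real.pi / m) := by ring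
    rw [harg, Real.sin_neg, abs_neg, abs_of_pos hs]
  · have him : i + 1 = m := by omega
    have hz : (i + 1) % m = 0 := by rw [him, Nat.mod_self]
    rw [hz]
    have hi' : (i:ℝ) = (m:ℝ) - 1 := by
      have : ((i:ℝ) + 1) = (m:ℝ) := by exact_mod_cast him
      linarith
    have harg : Real.pi * ((i:ℝ) - ((0:ℕ):ℝ)) / m = Real.pi - Real.pi / m := by
      rw [Nat.cast_zero, hi']
      field_simp
      ring
    rw [harg, Real.sin_pi_sub, abs_of_pos hs]

set_option maxHeartbeats 1000000 in
/-- The interaction sign estimate in the proof of Proposition 3.7: with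
`d_{ij} = 2|sin(π(i-j)/m)|` for distinct `i,j < m` and `d_{ij} = √2` for `i < m ≤ j < 2m`,
if `N ≥ 5` and `m ≥ √2 π (π/√2)^{1/(N-3)}` then
`∑_{i≠j<m} d_{ij}^{2-N} - ∑_{i<m} ∑_{m≤j<2m} d_{ij}^{2-N}
  ≥ 2m (2 sin(π/m))^{2-N} - m² (√2)^{2-N}
  > m [2 (2π/m)^{2-N} - m (√2)^{2-N}] ≥ 0`. -/
theorem stmt14 (N m : ℕ) (hN : 5 ≤ N)
    (hm : Real.sqrt 2 * Real.pi * (Real.pi / Real.sqrt 2) ^ ((1 : ℝ) / ((N : ℝ) - 3)) ≤ (m : ℝ))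
    (d : ℕ → ℕ → ℝ)
    (hd1 : ∀ i j : ℕ, i < m → j < m → i ≠ j →
      d i j = 2 * |Real.sin (Real.pi * ((i : ℝ) - (j : ℝ)) / m)|)
    (hd2 : ∀ i j : ℕ, i < m → m ≤ j → j < 2 * m → d i j = Real.sqrt 2) :
    (∑ i ∈ Finset.range m, ∑ j ∈ Finset.range m,
        if i ≠ j then d i j ^ ((2 : ℝ) - (N : ℝ)) else 0) -
      (∑ i ∈ Finset.range m, ∑ j ∈ Finset.Ico m (2 * m), d i j ^ ((2 : ℝ) - (N : ℝ))) ≥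
      2 * m * (2 * Real.sin (Real.pi / m)) ^ ((2 : ℝ) - (N : ℝ)) -
        (m : ℝ) ^ 2 * Real.sqrt 2 ^ ((2 : ℝ) - (N : ℝ)) ∧
    2 * m * (2 * Real.sin (Real.pi / m)) ^ ((2 : ℝ) - (N : ℝ)) -
        (m : ℝ) ^ 2 * Real.sqrt 2 ^ ((2 : ℝ) - (N : ℝ)) >
      (m : ℝ) * (2 * (2 * Real.pi / m) ^ ((2 : ℝ) - (N : ℝ)) -
        (m : ℝ) * Real.sqrt 2 ^ ((2 : ℝ) - (N : ℝ))) ∧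
    (m : ℝ) * (2 * (2 * Real.pi / m) ^ ((2 : ℝ) - (N : ℝ)) -
        (m : ℝ) * Real.sqrt 2 ^ ((2 : ℝ) - (N : ℝ))) ≥ 0 := by
  have hπ := Real.pi_pos
  have hπ3 := Real.pi_gt_three
  have h2pos : (0:ℝ) < Real.sqrt 2 := Real.sqrt_pos.2 (by norm_num)
  have h2sq : Real.sqrt 2 * Real.sqrt 2 = 2 := Real.mul_self_sqrt (by norm_num)
  have h2gt1 : (1:ℝ) < Real.sqrt 2 := by nlinarith
  have hs2pi : Real.sqrt 2 ≤ Real.pi := by nlinarith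
  have hN5 : (5:ℝ) ≤ (N:ℝ) := by exact_mod_cast hN
  have hbase : 1 ≤ Real.pi / Real.sqrt 2 := (one_le_div h2pos).2 hs2pi
  have hexp0 : 0 ≤ (1:ℝ) / ((N:ℝ) - 3) := div_nonneg zero_le_one (by linarith)
  have hpow1 : 1 ≤ (Real.pi / Real.sqrt 2) ^ ((1:ℝ)/((N:ℝ)-3)) := Real.one_le_rpow hbase hexp0
  have hsp : Real.sqrt 2 * Real.pi ≤ (m:ℝ) := by
    refine le_trans ?_ hm
    nlinarith [mul_nonneg (by positivity : (0:ℝ) ≤ Real.sqrt 2 * Real.pi)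
      (sub_nonneg.2 hpow1)]
  have hm3 : (3:ℝ) < (m:ℝ) := by nlinarith [mul_pos h2pos hπ]
  have hm3n : 3 ≤ m := by
    have : (3:ℕ) < m := by exact_mod_cast hm3
    omega
  have hm0 : (0:ℝ) < m := by linarith
  have hm1 : (1:ℝ) < m := by linarith
  have hsin : 0 < Real.sin (Real.pi / m) :=
    Real.sin_pos_of_pos_of_lt_pi (by positivity) (div_lt_self hπ hm1)
  have hsinlt : Real.sin (Real.pi / m) < Real.pi / m := Real.sin_lt (by positivity)
  set e : ℝ := (2:ℝ) - (N:ℝ) with hedef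
  have he_neg : e < 0 := by rw [hedef]; linarith
  clear_value e
  set S : ℝ := (2 * Real.sin (Real.pi / m)) ^ e with hSdef
  clear_value S
  -- cross sum is exactly m² √2^e
  have hcross : ∑ i ∈ range m, ∑ j ∈ Finset.Ico m (2*m), d i j ^ e
      = (m:ℝ)^2 * Real.sqrt 2 ^ e := by
    have hrow : ∀ i ∈ range m, ∑ j ∈ Finset.Ico m (2*m), d i j ^ e
        = (m:ℝ) * Real.sqrt 2 ^ e := by
      intro i hi
      rw [Finset.sum_congr rfl (fun j hj => by
        rw [hd2 i j (mem_range.1 hi) (mem_Ico.1 hj).1 (mem_Ico.1 hj).2])]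
      rw [Finset.sum_const, Nat.card_Ico]
      have h2m : 2*m - m = m := by omega
      rw [h2m, nsmul_eq_mul]
    rw [Finset.sum_congr rfl hrow, Finset.sum_const, Finset.card_range, nsmul_eq_mul]
    ring
  -- each inner row sum is at least 2S
  have hinner : ∀ i ∈ range m, 2 * S ≤ ∑ j ∈ range m,
      (if i ≠ j then d i j ^ e else 0) := by
    intro i hi
    have hi' := mem_range.1 hi
    set j₁ := (i+1) % m with hj1
    set j₂ := (i + (m-1)) % m with hj2
    have hmpos : 0 < m := by omega
    have hj1lt : j₁ < m := Nat.mod_lt _ hmpos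
    have hj2lt : j₂ < m := Nat.mod_lt _ hmpos
    have hj1v : j₁ = if i + 1 = m then 0 else i + 1 := by
      by_cases h : i + 1 = m
      · simp [hj1, h]
      · rw [hj1, Nat.mod_eq_of_lt (by omega)]; simp [h]
    have hj2v : j₂ = if i = 0 then m - 1 else i - 1 := by
      by_cases h : i = 0
      · rw [hj2, h]
        simp only [if_pos rfl, Nat.zero_add]
        exact Nat.mod_eq_of_lt (by omega)
      · have hrw : i + (m-1) = (i-1) + m := by omega
        rw [hj2, hrw, Nat.add_mod_right, Nat.mod_eq_of_lt (by omega)]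
        simp [h]
    have hne1 : i ≠ j₁ := by rw [hj1v]; split <;> omega
    have hne2 : i ≠ j₂ := by rw [hj2v]; split <;> omega
    have hne12 : j₁ ≠ j₂ := by rw [hj1v, hj2v]; split <;> split <;> omega
    have hdv1 : d i j₁ = 2 * Real.sin (Real.pi / m) := by
      rw [hd1 i j₁ hi' hj1lt hne1, hj1, abs_sin_succ m i hm3n hi']
    have hsucc : (j₂ + 1) % m = i := by
      rw [hj2v]
      by_cases h : i = 0
      · rw [if_pos h, h]
        have : m - 1 + 1 = m := by omega
        rw [this, Nat.mod_self]
      · rw [if_neg h]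
        have : i - 1 + 1 = i := by omega
        rw [this, Nat.mod_eq_of_lt hi']
    have hdv2 : d i j₂ = 2 * Real.sin (Real.pi / m) := by
      rw [hd1 i j₂ hi' hj2lt hne2]
      have h1 : Real.pi * ((i:ℝ) - (j₂:ℝ)) / m = -(Real.pi * ((j₂:ℝ) - (i:ℝ)) / m) := by
        ring
      rw [h1, Real.sin_neg, abs_neg]
      have haux := abs_sin_succ m j₂ hm3n hj2lt
      rw [hsucc] at haux
      rw [haux]
    have hsub : ({j₁, j₂} : Finset ℕ) ⊆ range m := by
      intro x hx
      simp only [Finset.mem_insert, Finset.mem_singleton] at hx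
      rcases hx with h | h <;> simp [h, hj1lt, hj2lt]
    calc 2 * S = (if i ≠ j₁ then d i j₁ ^ e else 0) +
        (if i ≠ j₂ then d i j₂ ^ e else 0) := by
          rw [if_pos hne1, if_pos hne2, hdv1, hdv2, ← hSdef]; ring
      _ = ∑ j ∈ ({j₁, j₂} : Finset ℕ), (if i ≠ j then d i j ^ e else 0) := by
          rw [Finset.sum_pair hne12]
      _ ≤ ∑ j ∈ range m, (if i ≠ j then d i j ^ e else 0) := by
          apply Finset.sum_le_sum_of_subset_of_nonneg hsub
          intro j hj _
          by_cases hij : i ≠ j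
          · rw [if_pos hij, hd1 i j hi' (mem_range.1 hj) hij]
            positivity
          · rw [if_neg hij]
    -- end inner
  have hsum : 2 * (m:ℝ) * S ≤ ∑ i ∈ range m, ∑ j ∈ range m,
      (if i ≠ j then d i j ^ e else 0) := by
    calc 2 * (m:ℝ) * S = ∑ _i ∈ range m, 2 * S := by
          rw [Finset.sum_const, Finset.card_range, nsmul_eq_mul]; ring
      _ ≤ _ := Finset.sum_le_sum hinner
  -- strict middle inequality ingredient
  have hPS : (2 * Real.pi / (m:ℝ)) ^ e < S := by
    rw [hSdef]
    exact Real.rpow_lt_rpow_of_neg (by positivity) (by rw [mul_div_assoc]; linarith) he_neg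
  -- third inequality
  set a : ℝ := (N:ℝ) - 2 with hadef
  have ha : e = -a := by rw [hedef, hadef]; ring
  clear_value a
  have hT : Real.sqrt 2 ^ e = (Real.sqrt 2 ^ a)⁻¹ := by
    rw [ha, Real.rpow_neg h2pos.le]
  have hP : (2 * Real.pi / (m:ℝ)) ^ e = ((m:ℝ) / (2 * Real.pi)) ^ a := by
    rw [ha, Real.rpow_neg (by positivity), ← Real.inv_rpow (by positivity), inv_div]
  obtain ⟨t, htdef⟩ : ∃ t : ℝ, t = (m:ℝ) / (Real.sqrt 2 * Real.pi) := ⟨_, rfl⟩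
  have ht0 : (Real.pi / Real.sqrt 2) ^ ((1:ℝ)/((N:ℝ)-3)) ≤ t := by
    rw [htdef, le_div_iff₀ (by positivity)]
    nlinarith [hm]
  have ht1 : (1:ℝ) ≤ t := le_trans hpow1 ht0
  have htpos : (0:ℝ) < t := by linarith
  have hmt : (m:ℝ) = Real.sqrt 2 * Real.pi * t := by
    rw [htdef]; field_simp
  have h1 : Real.pi / Real.sqrt 2 ≤ t ^ ((N:ℝ)-3) := by
    calc Real.pi / Real.sqrt 2
        = ((Real.pi / Real.sqrt 2) ^ ((1:ℝ)/((N:ℝ)-3))) ^ ((N:ℝ)-3) := by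
          rw [← Real.rpow_mul (by positivity), one_div,
            inv_mul_cancel₀ (by linarith : ((N:ℝ)-3) ≠ 0), Real.rpow_one]
      _ ≤ t ^ ((N:ℝ)-3) := Real.rpow_le_rpow (by positivity) ht0 (by linarith)
  have hta : t ^ a = t * t ^ ((N:ℝ)-3) := by
    rw [show a = 1 + ((N:ℝ)-3) by rw [hadef]; ring, Real.rpow_add htpos, Real.rpow_one]
  have hkey : (m:ℝ) ≤ 2 * t ^ a := by
    have h3 : t * (Real.pi / Real.sqrt 2) ≤ t * t ^ ((N:ℝ)-3) :=
      mul_le_mul_of_nonneg_left h1 htpos.le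
    calc (m:ℝ) = Real.sqrt 2 * Real.pi * t := hmt
      _ = 2 * (t * (Real.pi / Real.sqrt 2)) := by
          have h24 : Real.pi / Real.sqrt 2 = Real.sqrt 2 * Real.pi / 2 := by
            rw [div_eq_div_iff h2pos.ne' two_ne_zero]
            linear_combination -Real.pi * h2sq
          rw [h24]; ring
      _ ≤ 2 * (t * t ^ ((N:ℝ)-3)) := by linarith
      _ = 2 * t ^ a := by rw [hta]
  have hs2a : (0:ℝ) < Real.sqrt 2 ^ a := Real.rpow_pos_of_pos h2pos _
  have hmul : ((m:ℝ) / (2 * Real.pi)) ^ a * Real.sqrt 2 ^ a = t ^ a := by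
    rw [← Real.mul_rpow (by positivity) h2pos.le, htdef]
    congr 1
    rw [div_mul_eq_mul_div, div_eq_div_iff (by positivity) (by positivity)]
    linear_combination ((m:ℝ) * Real.pi) * h2sq
  have hthird : (m:ℝ) * (2 * (2 * Real.pi / (m:ℝ)) ^ e -
      (m:ℝ) * Real.sqrt 2 ^ e) ≥ 0 := by
    apply mul_nonneg hm0.le
    rw [hP, hT, sub_nonneg, ← div_eq_mul_inv, div_le_iff₀ hs2a]
    calc (m:ℝ) ≤ 2 * t ^ a := hkey
      _ = 2 * (((m:ℝ) / (2 * Real.pi)) ^ a * Real.sqrt 2 ^ a) := by rw [hmul]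
      _ = 2 * ((m:ℝ) / (2 * Real.pi)) ^ a * Real.sqrt 2 ^ a := by ring
  refine ⟨?_, ?_, hthird⟩
  · rw [hcross]; linarith [hsum]
  · nlinarith [mul_pos hm0 (sub_pos.2 hPS)]
end
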